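/- arXiv:1812.04486 — 4 statements merged into one kernel-verified Lean document; each statement's English description precedes it below -/
import Mathlib

section
/- Let f : ℝ^n → ℝ be a differentiable convex function whose i-th partial derivative is uniformly L_i-Lipschitz along the i-th coordinate direction for each i, let L_max be the maximum of the L_i, assume f attains its minimum f* at some point x*, and assume the initial sublevel set {x : f(x) ≤ f(x₀)} is contained in the ball of radius R₀ around x* (i.e. ‖x − x*‖₂ ≤ R₀ whenever f(x) ≤ f(x₀)). Consider randomized coordinate descent: on a probability space, let (I_k) be an i.i.d. sequence of indices uniformly distributed on {1,…,n}, set X₀ = x₀ deterministically, and X_{k+1} = X_k − (1/L_{I_k}) ∂_{I_k} f(X_k) e_{I_k}, where e_i is the i-th standard basis vector. Then for every k ≥ 1, E[f(X_k)] − f* ≤ 2 n L_max R₀² / k. -/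
open MeasureTheory


variable {n : ℕ}

local notation "E" => EuclideanSpace ℝ (Fin n)

lemma rcd_hasDerivAt_line (f : E → ℝ) (hdiff : Differentiable ℝ f) (x v : E) (t : ℝ) :
    HasDerivAt (fun s : ℝ => f (x + s • v)) (fderiv ℝ f (x + t • v) v) t := by
  have h1 : HasDerivAt (fun s : ℝ => x + s • v) v t := by
    simpa using ((hasDerivAt_id t).smul_const v).const_add x
  exact ((hdiff (x + t • v)).hasFDerivAt).comp_hasDerivAt t h1

lemma rcd_decomp (f : E → ℝ) (x v : E) :
    fderiv ℝ f x v = ∑ i, v i * fderiv ℝ f x (EuclideanSpace.single i 1) := by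
  have hv : v = ∑ i, v i • EuclideanSpace.single i 1 := by
    have h := (PiLp.basisFun 2 ℝ (Fin n)).sum_repr v
    simp only [PiLp.basisFun_repr] at h
    have hb : ∀ i : Fin n, (PiLp.basisFun 2 ℝ (Fin n)) i = EuclideanSpace.single i 1 := by
      intro i; rw [PiLp.basisFun_apply]
    simp_rw [hb] at h
    exact h.symm
  conv_lhs => rw [hv]
  rw [map_sum]
  simp [smul_eq_mul]

lemma rcd_descent (f : E → ℝ) (hdiff : Differentiable ℝ f) (i : Fin n) (Li : ℝ)
    (hLip : ∀ (x : E) (t : ℝ),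
      |fderiv ℝ f (x + t • EuclideanSpace.single i 1) (EuclideanSpace.single i 1) -
        fderiv ℝ f x (EuclideanSpace.single i 1)| ≤ Li * |t|)
    (x : E) (t : ℝ) :
    f (x + t • EuclideanSpace.single i 1) ≤
      f x + t * fderiv ℝ f x (EuclideanSpace.single i 1) + Li / 2 * t ^ 2 := by
  set e : E := EuclideanSpace.single i 1 with he
  set d : ℝ := fderiv ℝ f x e with hd
  set φ : ℝ → ℝ := fun s => f x + s * d + Li / 2 * s ^ 2 - f (x + s • e) with hφ
  have hφd : ∀ s : ℝ, HasDerivAt φ (d + Li * s - fderiv ℝ f (x + s • e) e) s := by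
    intro s
    have h1 : HasDerivAt (fun s : ℝ => f x + s * d + Li / 2 * s ^ 2)
        (d + Li * s) s := by
      have ha : HasDerivAt (fun s : ℝ => f x + s * d) (1 * d) s :=
        ((hasDerivAt_id s).mul_const d).const_add (f x)
      have hb : HasDerivAt (fun s : ℝ => Li / 2 * s ^ 2) (Li / 2 * (2 * s ^ 1)) s :=
        (hasDerivAt_pow 2 s).const_mul (Li / 2)
      have := ha.add hb
      exact this.congr_deriv (by ring)
    exact h1.sub (rcd_hasDerivAt_line f hdiff x e s)
  have hφdiff : Differentiable ℝ φ := fun s => (hφd s).differentiableAt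
  have hφ0 : φ 0 = 0 := by simp [hφ]
  have key : 0 ≤ φ t := by
    rcases le_or_gt 0 t with ht | ht
    · have hmono : MonotoneOn φ (Set.Ici (0 : ℝ)) := by
        apply monotoneOn_of_deriv_nonneg (convex_Ici 0) hφdiff.continuous.continuousOn
          hφdiff.differentiableOn
        intro s hs
        rw [interior_Ici] at hs
        rw [(hφd s).deriv]
        have h2 := hLip x s
        rw [abs_of_pos (Set.mem_Ioi.1 hs)] at h2
        have := abs_le.1 h2
        linarith [this.2]
      have := hmono (Set.self_mem_Ici) (Set.mem_Ici.2 ht) ht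
      linarith [hφ0 ▸ this]
    · have hanti : AntitoneOn φ (Set.Iic (0 : ℝ)) := by
        apply antitoneOn_of_deriv_nonpos (convex_Iic 0) hφdiff.continuous.continuousOn
          hφdiff.differentiableOn
        intro s hs
        rw [interior_Iic] at hs
        rw [(hφd s).deriv]
        have h2 := hLip x s
        rw [abs_of_neg (Set.mem_Iio.1 hs)] at h2
        have := abs_le.1 h2
        linarith [this.1]
      have := hanti (Set.mem_Iic.2 ht.le) (Set.self_mem_Iic) ht.le
      linarith [hφ0 ▸ this]
  simp only [hφ] at key
  linarith

lemma rcd_partial_zero (f : E → ℝ) (hdiff : Differentiable ℝ f) (i : Fin n)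
    (hLip : ∀ (x : E) (t : ℝ),
      |fderiv ℝ f (x + t • EuclideanSpace.single i 1) (EuclideanSpace.single i 1) -
        fderiv ℝ f x (EuclideanSpace.single i 1)| ≤ 0 * |t|)
    (fstar : ℝ) (hmin : ∀ y, fstar ≤ f y) (x : E) :
    fderiv ℝ f x (EuclideanSpace.single i 1) = 0 := by
  set e : E := EuclideanSpace.single i 1 with he
  set d : ℝ := fderiv ℝ f x e with hd
  set ψ : ℝ → ℝ := fun s => f (x + s • e) - s * d with hψ
  have hψd : ∀ s : ℝ, HasDerivAt ψ (fderiv ℝ f (x + s • e) e - d) s := by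
    intro s
    exact (rcd_hasDerivAt_line f hdiff x e s).sub
      (((hasDerivAt_id s).mul_const d))|>.congr_deriv (by ring)
  have hconst : ∀ s : ℝ, ψ s = ψ 0 := by
    intro s
    apply is_const_of_deriv_eq_zero (fun u => (hψd u).differentiableAt)
    intro u
    rw [(hψd u).deriv]
    have h2 := hLip x u
    rw [zero_mul] at h2
    have := abs_le.1 h2
    linarith [this.1, this.2]
  have hlin : ∀ s : ℝ, f (x + s • e) = f x + s * d := by
    intro s
    have := hconst s
    simp only [hψ] at this
    have h0 : f (x + (0:ℝ) • e) - 0 * d = f x := by simp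
    rw [h0] at this
    linarith
  by_contra hne
  have hb : ∀ s : ℝ, fstar ≤ f x + s * d := fun s => (hlin s) ▸ hmin _
  have := hb ((fstar - 1 - f x) / d)
  rw [div_mul_cancel₀ _ hne] at this
  linarith

lemma rcd_convex_grad (f : E → ℝ) (hdiff : Differentiable ℝ f)
    (hconv : ConvexOn ℝ Set.univ f) (x y : E) :
    f x + fderiv ℝ f x (y - x) ≤ f y := by
  set g : ℝ → ℝ := fun t => f (x + t • (y - x)) with hg
  have hgconv : ConvexOn ℝ Set.univ g := by
    have := hconv.comp_affineMap (AffineMap.lineMap x y)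
    have heq : ∀ t : ℝ, (f ∘ (AffineMap.lineMap x y)) t = g t := by
      intro t
      simp [hg, AffineMap.lineMap_apply, Function.comp]
      congr 1
      module
    rw [Set.preimage_univ] at this
    have hfe : (f ∘ (AffineMap.lineMap x y) : ℝ → ℝ) = g := funext heq
    rwa [hfe] at this
  have hg0 : HasDerivAt g (fderiv ℝ f x (y - x)) 0 := by
    have := rcd_hasDerivAt_line f hdiff x (y - x) 0
    simpa using this
  have hslope := hgconv.le_slope_of_hasDerivAt (Set.mem_univ (0:ℝ)) (Set.mem_univ (1:ℝ))
    zero_lt_one hg0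
  have h01 : slope g 0 1 = g 1 - g 0 := by simp [slope_def_field]
  have hg1 : g 1 = f y := by simp [hg]
  have hg0' : g 0 = f x := by simp [hg]
  rw [h01, hg1, hg0'] at hslope
  linarith

noncomputable def rcdStep (f : E → ℝ) (L : Fin n → ℝ) (x : E) (i : Fin n) : E :=
  x - (1 / L i * fderiv ℝ f x (EuclideanSpace.single i 1)) • EuclideanSpace.single i 1

noncomputable def rcdPhi (f : E → ℝ) (L : Fin n → ℝ) (x₀ : E) :
    (k : ℕ) → (Fin k → Fin n) → E
  | 0, _ => x₀
  | (k+1), σ => rcdStep f L (rcdPhi f L x₀ k (Fin.init σ)) (σ (Fin.last k))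

lemma rcd_step_decrease (f : E → ℝ) (hdiff : Differentiable ℝ f) (L : Fin n → ℝ) (i : Fin n)
    (hLip : ∀ (x : E) (t : ℝ),
      |fderiv ℝ f (x + t • EuclideanSpace.single i 1) (EuclideanSpace.single i 1) -
        fderiv ℝ f x (EuclideanSpace.single i 1)| ≤ L i * |t|)
    (hLnn : 0 ≤ L i) (Lmax : ℝ) (hLm : L i ≤ Lmax) (hLmpos : 0 < Lmax)
    (fstar : ℝ) (hmin : ∀ y, fstar ≤ f y) (x : E) :
    f (rcdStep f L x i) ≤ f x - (fderiv ℝ f x (EuclideanSpace.single i 1)) ^ 2 / (2 * Lmax) := by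
  set d : ℝ := fderiv ℝ f x (EuclideanSpace.single i 1) with hd
  rcases eq_or_lt_of_le hLnn with h0 | hpos
  · have hdz : d = 0 := rcd_partial_zero f hdiff i (by rw [h0]; exact hLip) fstar hmin x
    have : rcdStep f L x i = x := by
      rw [rcdStep, ← hd, hdz, mul_zero, zero_smul, sub_zero]
    rw [this, hdz]
    simp
  · have hstep : rcdStep f L x i = x + (-(1 / L i * d)) • EuclideanSpace.single i 1 := by
      rw [rcdStep, ← hd, sub_eq_add_neg, ← neg_smul]
    have hdesc := rcd_descent f hdiff i (L i) hLip x (-(1 / L i * d))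
    rw [← hstep, ← hd] at hdesc
    have hcalc : f x + -(1 / L i * d) * d + L i / 2 * (-(1 / L i * d)) ^ 2
        = f x - d ^ 2 / (2 * L i) := by
      field_simp
      ring
    rw [hcalc] at hdesc
    have hmono : d ^ 2 / (2 * Lmax) ≤ d ^ 2 / (2 * L i) := by
      apply div_le_div_of_nonneg_left (sq_nonneg d) (by linarith) (by linarith)
    linarith

lemma rcd_grad_lower (f : E → ℝ) (hdiff : Differentiable ℝ f)
    (hconv : ConvexOn ℝ Set.univ f) (xstar : E) (fstar : ℝ) (hxstar : f xstar = fstar)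
    (hmin : ∀ y, fstar ≤ f y) (R₀ : ℝ) (hR₀nn : 0 ≤ R₀) (x : E) (hx : ‖x - xstar‖ ≤ R₀) :
    (f x - fstar) ^ 2 ≤ (∑ i, (fderiv ℝ f x (EuclideanSpace.single i 1)) ^ 2) * R₀ ^ 2 := by
  set g : E := WithLp.toLp 2 (fun i => fderiv ℝ f x (EuclideanSpace.single i 1) : Fin n → ℝ) with hgdef
  have h1 : f x - fstar ≤ fderiv ℝ f x (x - xstar) := by
    have := rcd_convex_grad f hdiff hconv x xstar
    rw [hxstar] at this
    have hmap : fderiv ℝ f x (xstar - x) = - fderiv ℝ f x (x - xstar) := by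
      rw [← map_neg]; congr 1; abel
    linarith [hmap ▸ this]
  have h2 : fderiv ℝ f x (x - xstar) = inner ℝ g (x - xstar) := by
    rw [rcd_decomp f x (x - xstar), PiLp.inner_apply]
    apply Finset.sum_congr rfl
    intro i _
    simp [hgdef, RCLike.inner_apply]
  have h3 : inner ℝ g (x - xstar) ≤ ‖g‖ * ‖x - xstar‖ := real_inner_le_norm g (x - xstar)
  have h4 : f x - fstar ≤ ‖g‖ * R₀ := by
    have : ‖g‖ * ‖x - xstar‖ ≤ ‖g‖ * R₀ :=
      mul_le_mul_of_nonneg_left hx (norm_nonneg g)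
    linarith [h1, h2 ▸ h3]
  have h5 : ‖g‖ ^ 2 = ∑ i, (fderiv ℝ f x (EuclideanSpace.single i 1)) ^ 2 := by
    rw [← real_inner_self_eq_norm_sq, PiLp.inner_apply]
    apply Finset.sum_congr rfl
    intro i _
    simp [hgdef, RCLike.inner_apply]
  have h6 : 0 ≤ f x - fstar := sub_nonneg.2 (hmin x)
  calc (f x - fstar) ^ 2 ≤ (‖g‖ * R₀) ^ 2 := by nlinarith
    _ = (∑ i, (fderiv ℝ f x (EuclideanSpace.single i 1)) ^ 2) * R₀ ^ 2 := by
        rw [mul_pow, h5]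

lemma rcd_rate (C : ℝ) (hC : 0 < C) (a : ℕ → ℝ) (h0 : ∀ k, 0 ≤ a k)
    (hrec : ∀ k, a (k + 1) ≤ a k - (a k) ^ 2 / C) (k : ℕ) (hk : 1 ≤ k) :
    a k ≤ C / k := by
  have hmono : ∀ j, a (j + 1) ≤ a j := by
    intro j
    have := hrec j
    have h2 : 0 ≤ (a j) ^ 2 / C := by positivity
    linarith
  have claim : ∀ j, 0 < a j → (j : ℝ) ≤ C / a j := by
    intro j
    induction j with
    | zero => intro hpos; simp; positivity
    | succ j ih =>
      intro hpos
      have hposj : 0 < a j := lt_of_lt_of_le hpos (hmono j)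
      have h1 : (j : ℝ) ≤ C / a j := ih hposj
      have hsq : a j ^ 2 ≤ (a j - a (j + 1)) * C := by
        rw [← div_le_iff₀ hC]
        linarith [hrec j]
      have key : C / a j + 1 ≤ C / a (j + 1) := by
        rw [div_add' _ _ _ (ne_of_gt hposj), div_le_div_iff₀ hposj hpos]
        nlinarith [mul_le_mul_of_nonneg_left (hmono j) hposj.le]
      push_cast
      linarith
  rcases (h0 k).eq_or_lt with hz | hpos
  · have : (0:ℝ) < k := by exact_mod_cast hk
    rw [← hz]; positivity
  · have h1 := claim k hpos
    have hkpos : (0:ℝ) < k := by exact_mod_cast hk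
    rw [le_div_iff₀ hkpos]
    calc a k * k ≤ a k * (C / a k) := by
          apply mul_le_mul_of_nonneg_left h1 hpos.le
      _ = C := by field_simp

lemma rcd_measure_atom {Ω : Type*} [MeasurableSpace Ω] (μ : Measure Ω)
    (I : ℕ → Ω → Fin n)
    (hIindep : ProbabilityTheory.iIndepFun I μ)
    (hIunif : ∀ (k : ℕ) (i : Fin n), μ {ω | I k ω = i} = 1 / (n : ENNReal))
    (k : ℕ) (σ : Fin k → Fin n) :
    μ (⋂ j : Fin k, I (j : ℕ) ⁻¹' {σ j}) = (1 / (n : ENNReal)) ^ k := by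
  classical
  set sets : (j : ℕ) → Set (Fin n) :=
    fun j => if h : j < k then {σ ⟨j, h⟩} else Set.univ with hsets
  have hmeas : ∀ j ∈ Finset.range k, MeasurableSet (sets j) := by
    intro j _
    by_cases h : j < k <;> simp [hsets, h]
  have hprod := hIindep.measure_inter_preimage_eq_mul (Finset.range k) hmeas
  have hset : (⋂ j ∈ Finset.range k, I j ⁻¹' sets j) = ⋂ j : Fin k, I (j : ℕ) ⁻¹' {σ j} := by
    ext ω
    simp only [Set.mem_iInter₂, Set.mem_iInter, Finset.mem_range, Set.mem_preimage]
    constructor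
    · intro h j
      have := h j.1 j.2
      rw [hsets] at this
      simp only [dif_pos j.2] at this
      simpa [Fin.eta] using this
    · intro h j hj
      rw [hsets]
      simp only [dif_pos hj]
      exact h ⟨j, hj⟩
  have hval : ∀ j ∈ Finset.range k, μ (I j ⁻¹' sets j) = 1 / (n : ENNReal) := by
    intro j hj
    rw [Finset.mem_range] at hj
    have h1 : I j ⁻¹' sets j = {ω | I j ω = σ ⟨j, hj⟩} := by
      rw [hsets]; simp only [dif_pos hj]; rfl
    rw [h1, hIunif]
  rw [hset] at hprod
  rw [hprod, Finset.prod_congr rfl hval, Finset.prod_const, Finset.card_range]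

lemma rcd_integral_eq {Ω : Type*} [MeasurableSpace Ω] (μ : Measure Ω) [IsProbabilityMeasure μ]
    (I : ℕ → Ω → Fin n) (hImeas : ∀ k, Measurable (I k)) (k : ℕ)
    (hatom : ∀ σ : Fin k → Fin n,
      μ (⋂ j : Fin k, I (j : ℕ) ⁻¹' {σ j}) = (1 / (n : ENNReal)) ^ k)
    (hn : 0 < n) (F : (Fin k → Fin n) → ℝ) :
    ∫ ω, F (fun j => I (j : ℕ) ω) ∂μ = ∑ σ : Fin k → Fin n, ((1 : ℝ) / n) ^ k * F σ := by
  classical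
  have hAmeas : ∀ σ : Fin k → Fin n, MeasurableSet (⋂ j : Fin k, I (j : ℕ) ⁻¹' {σ j}) :=
    fun σ => MeasurableSet.iInter fun j => (hImeas j) (measurableSet_singleton _)
  have hpt : ∀ ω, F (fun j => I (j : ℕ) ω) =
      ∑ σ : Fin k → Fin n,
        Set.indicator (⋂ j : Fin k, I (j : ℕ) ⁻¹' {σ j}) (fun _ => F σ) ω := by
    intro ω
    rw [Finset.sum_eq_single (fun j : Fin k => I (j : ℕ) ω)]
    · rw [Set.indicator_of_mem]
      simp [Set.mem_iInter]
    · intro σ _ hne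
      rw [Set.indicator_of_notMem]
      intro hmem
      apply hne
      funext j
      simp only [Set.mem_iInter, Set.mem_preimage, Set.mem_singleton_iff] at hmem
      exact (hmem j).symm
    · intro h
      exact absurd (Finset.mem_univ _) h
  calc ∫ ω, F (fun j => I (j : ℕ) ω) ∂μ
      = ∫ ω, ∑ σ : Fin k → Fin n,
          Set.indicator (⋂ j : Fin k, I (j : ℕ) ⁻¹' {σ j}) (fun _ => F σ) ω ∂μ := by
        exact integral_congr_ae (Filter.Eventually.of_forall hpt)
    _ = ∑ σ : Fin k → Fin n, ∫ ω,
          Set.indicator (⋂ j : Fin k, I (j : ℕ) ⁻¹' {σ j}) (fun _ => F σ) ω ∂μ := by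
        apply integral_finset_sum
        intro σ _
        exact (integrable_const (F σ)).indicator (hAmeas σ)
    _ = ∑ σ : Fin k → Fin n, ((1 : ℝ) / n) ^ k * F σ := by
        apply Finset.sum_congr rfl
        intro σ _
        rw [integral_indicator_const (F σ) (hAmeas σ), measureReal_def, hatom σ]
        have : ((1 / (n : ENNReal)) ^ k).toReal = ((1 : ℝ) / n) ^ k := by
          rw [ENNReal.toReal_pow, ENNReal.toReal_div]
          simp
        rw [this, smul_eq_mul]


/-- **Convergence rate of randomized coordinate descent for convex functions**
(Proposition 1).  Let `f : ℝ^n → ℝ` be differentiable and convex, with its `i`-th partial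
derivative uniformly `L i`-Lipschitz along the `i`-th coordinate direction, let
`Lmax = maxᵢ L i`, assume `f` attains its minimum `f*` at `x*`, and assume the initial
sublevel set `{x : f x ≤ f x₀}` is contained in the ball of radius `R₀` around `x*`.
For randomized coordinate descent with i.i.d. uniform coordinates `I k` and iterates
`X 0 = x₀`, `X (k+1) = X k − (1 / L (I k)) ∂_{I k} f (X k) e_{I k}`, we have for every
`k ≥ 1` that `E[f (X k)] − f* ≤ 2 n Lmax R₀² / k`. -/
theorem randomized_coordinate_descent_convex_rate
    (n : ℕ) (hn : 0 < n)
    (f : EuclideanSpace ℝ (Fin n) → ℝ)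
    (hdiff : Differentiable ℝ f)
    (hconv : ConvexOn ℝ Set.univ f)
    (L : Fin n → ℝ)
    (hLip : ∀ (i : Fin n) (x : EuclideanSpace ℝ (Fin n)) (t : ℝ),
      |fderiv ℝ f (x + t • EuclideanSpace.single i 1) (EuclideanSpace.single i 1) -
        fderiv ℝ f x (EuclideanSpace.single i 1)| ≤ L i * |t|)
    (Lmax : ℝ) (hLmax : IsGreatest (Set.range L) Lmax)
    (xstar : EuclideanSpace ℝ (Fin n)) (fstar : ℝ)
    (hxstar : f xstar = fstar) (hmin : ∀ x, fstar ≤ f x)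
    (x₀ : EuclideanSpace ℝ (Fin n)) (R₀ : ℝ)
    (hR₀ : ∀ x, f x ≤ f x₀ → ‖x - xstar‖ ≤ R₀)
    (Ω : Type*) [MeasurableSpace Ω] (μ : Measure Ω) [IsProbabilityMeasure μ]
    (I : ℕ → Ω → Fin n)
    (hImeas : ∀ k, Measurable (I k))
    (hIindep : ProbabilityTheory.iIndepFun I μ)
    (hIunif : ∀ (k : ℕ) (i : Fin n), μ {ω | I k ω = i} = 1 / (n : ENNReal))
    (X : ℕ → Ω → EuclideanSpace ℝ (Fin n))
    (hX0 : ∀ ω, X 0 ω = x₀)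
    (hXrec : ∀ (k : ℕ) (ω : Ω), X (k + 1) ω = X k ω -
      (1 / L (I k ω) * fderiv ℝ f (X k ω) (EuclideanSpace.single (I k ω) 1)) •
        EuclideanSpace.single (I k ω) 1)
    (k : ℕ) (hk : 1 ≤ k) :
    (∫ ω, f (X k ω) ∂μ) - fstar ≤ 2 * n * Lmax * R₀ ^ 2 / k := by
  classical
  have hn' : (0 : ℝ) < n := by exact_mod_cast hn
  have hL_nonneg : ∀ i, 0 ≤ L i := by
    intro i
    have h1 := hLip i 0 1
    have h2 : (0:ℝ) ≤ |fderiv ℝ f ((0:EuclideanSpace ℝ (Fin n)) +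
        (1:ℝ) • EuclideanSpace.single i 1) (EuclideanSpace.single i 1) -
        fderiv ℝ f 0 (EuclideanSpace.single i 1)| := abs_nonneg _
    have := le_trans h2 h1
    simpa using this
  obtain ⟨i₀, hi₀⟩ := hLmax.1
  have hLmax_nn : 0 ≤ Lmax := hi₀ ▸ hL_nonneg i₀
  have hLle : ∀ i, L i ≤ Lmax := fun i => hLmax.2 ⟨i, rfl⟩
  have hR₀nn : 0 ≤ R₀ := le_trans (norm_nonneg _) (hR₀ x₀ le_rfl)
  have hkpos : (0 : ℝ) < k := by exact_mod_cast hk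
  -- representation of the iterates
  have hphi : ∀ (m : ℕ) (ω : Ω), X m ω = rcdPhi f L x₀ m (fun j => I (j : ℕ) ω) := by
    intro m
    induction m with
    | zero => intro ω; rw [hX0]; rfl
    | succ m ih =>
      intro ω
      rw [hXrec m ω, ih ω]
      show rcdStep f L (rcdPhi f L x₀ m fun j => I (j : ℕ) ω) (I m ω) = _
      have h1 : (fun j : Fin m => I (j : ℕ) ω)
          = Fin.init (fun j : Fin (m+1) => I (j : ℕ) ω) := by
        funext j; simp [Fin.init]
      simp only [rcdPhi, ← h1, Fin.val_last]
  -- the integral as a finite average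
  have hInt : ∫ ω, f (X k ω) ∂μ
      = ∑ σ : Fin k → Fin n, ((1 : ℝ) / n) ^ k * f (rcdPhi f L x₀ k σ) := by
    have h1 : ∀ ω, f (X k ω)
        = (fun σ => f (rcdPhi f L x₀ k σ)) (fun j : Fin k => I (j : ℕ) ω) := by
      intro ω; rw [hphi k ω]
    calc ∫ ω, f (X k ω) ∂μ
        = ∫ ω, (fun σ => f (rcdPhi f L x₀ k σ)) (fun j : Fin k => I (j : ℕ) ω) ∂μ :=
          integral_congr_ae (Filter.Eventually.of_forall h1)
      _ = _ := rcd_integral_eq μ I hImeas k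
          (rcd_measure_atom μ I hIindep hIunif k) hn (fun σ => f (rcdPhi f L x₀ k σ))
  rcases hLmax_nn.eq_or_lt with hLmax0 | hLmaxpos
  · -- degenerate case Lmax = 0 : f is constant
    have hL0 : ∀ i, L i = 0 := fun i => le_antisymm (hLmax0 ▸ hLle i) (hL_nonneg i)
    have hfconst : ∀ x, f x = fstar := by
      intro x
      have hfz : ∀ y, fderiv ℝ f y = 0 := by
        intro y
        ext v
        rw [ContinuousLinearMap.zero_apply, rcd_decomp f y v]
        have hpart : ∀ i : Fin n, fderiv ℝ f y (EuclideanSpace.single i 1) = 0 := by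
          intro i
          refine rcd_partial_zero f hdiff i ?_ fstar hmin y
          intro x t
          have := hLip i x t
          rwa [hL0 i] at this
        simp [hpart]
      have := is_const_of_fderiv_eq_zero hdiff hfz x xstar
      rw [this, hxstar]
    have hI0 : ∫ ω, f (X k ω) ∂μ = fstar := by
      have : ∀ ω, f (X k ω) = fstar := fun ω => hfconst _
      simp only [this]
      simp
    rw [hI0, ← hLmax0]
    simp
  rcases hR₀nn.eq_or_lt with hR0 | hR₀pos
  · -- degenerate case R₀ = 0 : x₀ is already the minimiser
    have hx0star : x₀ = xstar := by
      have h1 := hR₀ x₀ le_rfl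
      rw [← hR0] at h1
      exact sub_eq_zero.1 (norm_le_zero_iff.1 h1)
    have hflocmin : IsLocalMin f xstar :=
      Filter.Eventually.of_forall (fun y => hxstar ▸ hmin y)
    have hfz := hflocmin.fderiv_eq_zero
    have hstepfix : ∀ x₁ i, x₁ = xstar → rcdStep f L x₁ i = xstar := by
      intro x₁ i hx₁
      rw [rcdStep, hx₁, hfz]
      simp
    have hphiconst : ∀ (m : ℕ) (σ : Fin m → Fin n), rcdPhi f L x₀ m σ = xstar := by
      intro m
      induction m with
      | zero => intro σ; exact hx0star
      | succ m ih =>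
        intro σ
        simp only [rcdPhi]
        exact hstepfix _ _ (ih _)
    have hI0 : ∫ ω, f (X k ω) ∂μ = fstar := by
      have : ∀ ω, f (X k ω) = fstar := by
        intro ω
        rw [hphi k ω, hphiconst, hxstar]
      simp only [this]
      simp
    rw [hI0, ← hR0]
    simp
  -- main case
  set C : ℝ := 2 * n * Lmax * R₀ ^ 2 with hCdef
  have hC : 0 < C := by positivity
  set a : ℕ → ℝ := fun m =>
    ((1 : ℝ) / n) ^ m * ∑ σ : Fin m → Fin n, (f (rcdPhi f L x₀ m σ) - fstar) with hadef
  have h0 : ∀ m, 0 ≤ a m := by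
    intro m
    apply mul_nonneg (by positivity)
    exact Finset.sum_nonneg fun σ _ => sub_nonneg.2 (hmin _)
  have hstep : ∀ (x : EuclideanSpace ℝ (Fin n)) (i : Fin n),
      f (rcdStep f L x i) ≤ f x -
        (fderiv ℝ f x (EuclideanSpace.single i 1)) ^ 2 / (2 * Lmax) :=
    fun x i => rcd_step_decrease f hdiff L i (hLip i) (hL_nonneg i) Lmax (hLle i)
      hLmaxpos fstar hmin x
  have hstep' : ∀ (x : EuclideanSpace ℝ (Fin n)) (i : Fin n), f (rcdStep f L x i) ≤ f x := by
    intro x i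
    have h1 := hstep x i
    have h2 : 0 ≤ (fderiv ℝ f x (EuclideanSpace.single i 1)) ^ 2 / (2 * Lmax) := by positivity
    linarith
  have hsub : ∀ (m : ℕ) (σ : Fin m → Fin n), f (rcdPhi f L x₀ m σ) ≤ f x₀ := by
    intro m
    induction m with
    | zero => intro σ; exact le_rfl
    | succ m ih =>
      intro σ
      simp only [rcdPhi]
      exact le_trans (hstep' _ _) (ih _)
  have hsplit : ∀ m : ℕ, ∑ σ : Fin (m+1) → Fin n, (f (rcdPhi f L x₀ (m+1) σ) - fstar)
      = ∑ i : Fin n, ∑ τ : Fin m → Fin n,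
          (f (rcdStep f L (rcdPhi f L x₀ m τ) i) - fstar) := by
    intro m
    rw [← Equiv.sum_comp (Fin.snocEquiv (fun _ => Fin n))
      (fun σ => f (rcdPhi f L x₀ (m+1) σ) - fstar), Fintype.sum_prod_type]
    apply Finset.sum_congr rfl
    intro i _
    apply Finset.sum_congr rfl
    intro τ _
    congr 2
    have he : ((Fin.snocEquiv fun _ => Fin n) (i, τ)) = Fin.snoc τ i := rfl
    simp only [rcdPhi, he, Fin.init_snoc, Fin.snoc_last]
  have hrec : ∀ m, a (m + 1) ≤ a m - (a m) ^ 2 / C := by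
    intro m
    set s : ℝ := ∑ σ : Fin m → Fin n, (f (rcdPhi f L x₀ m σ) - fstar) with hsdef
    have hcard : (Fintype.card (Fin m → Fin n) : ℝ) = (n : ℝ) ^ m := by
      rw [Fintype.card_fun]
      push_cast
      simp
    -- bound for a fixed τ
    have hτ : ∀ τ : Fin m → Fin n,
        ∑ i : Fin n, (f (rcdStep f L (rcdPhi f L x₀ m τ) i) - fstar)
          ≤ n * (f (rcdPhi f L x₀ m τ) - fstar)
            - (f (rcdPhi f L x₀ m τ) - fstar) ^ 2 / (R₀ ^ 2 * (2 * Lmax)) := by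
      intro τ
      set y := rcdPhi f L x₀ m τ with hy
      have hg : (f y - fstar) ^ 2 / R₀ ^ 2
          ≤ ∑ i, (fderiv ℝ f y (EuclideanSpace.single i 1)) ^ 2 := by
        rw [div_le_iff₀ (by positivity)]
        exact rcd_grad_lower f hdiff hconv xstar fstar hxstar hmin R₀ hR₀nn y
          (hR₀ y (hsub m τ))
      have h1 : ∑ i : Fin n, (f (rcdStep f L y i) - fstar)
          ≤ ∑ i : Fin n, (f y - fstar
              - (fderiv ℝ f y (EuclideanSpace.single i 1)) ^ 2 / (2 * Lmax)) := by
        apply Finset.sum_le_sum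
        intro i _
        have := hstep y i
        linarith
      have h2 : ∑ i : Fin n, (f y - fstar
            - (fderiv ℝ f y (EuclideanSpace.single i 1)) ^ 2 / (2 * Lmax))
          = n * (f y - fstar)
            - (∑ i, (fderiv ℝ f y (EuclideanSpace.single i 1)) ^ 2) / (2 * Lmax) := by
        rw [Finset.sum_sub_distrib, Finset.sum_const, Finset.card_univ, Fintype.card_fin,
          ← Finset.sum_div]
        simp [nsmul_eq_mul]
      have h3 : (f y - fstar) ^ 2 / (R₀ ^ 2 * (2 * Lmax))
          ≤ (∑ i, (fderiv ℝ f y (EuclideanSpace.single i 1)) ^ 2) / (2 * Lmax) := by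
        rw [div_le_div_iff₀ (by positivity) (by positivity)] at *
        calc (f y - fstar) ^ 2 * (2 * Lmax)
            = ((f y - fstar) ^ 2 / R₀ ^ 2) * (2 * Lmax) * R₀ ^ 2 := by
              field_simp
          _ ≤ (∑ i, (fderiv ℝ f y (EuclideanSpace.single i 1)) ^ 2) * (2 * Lmax) * R₀ ^ 2 := by
              apply mul_le_mul_of_nonneg_right _ (by positivity)
              exact mul_le_mul_of_nonneg_right hg (by positivity)
          _ = (∑ i, (fderiv ℝ f y (EuclideanSpace.single i 1)) ^ 2) * (R₀ ^ 2 * (2 * Lmax)) := by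
              ring
      linarith [h1, h2 ▸ h1, h3]
    -- sum over τ
    have hsum : ∑ σ : Fin (m+1) → Fin n, (f (rcdPhi f L x₀ (m+1) σ) - fstar)
        ≤ n * s - (∑ τ : Fin m → Fin n, (f (rcdPhi f L x₀ m τ) - fstar) ^ 2)
            / (R₀ ^ 2 * (2 * Lmax)) := by
      rw [hsplit m, Finset.sum_comm]
      calc ∑ τ : Fin m → Fin n, ∑ i : Fin n,
            (f (rcdStep f L (rcdPhi f L x₀ m τ) i) - fstar)
          ≤ ∑ τ : Fin m → Fin n, (n * (f (rcdPhi f L x₀ m τ) - fstar)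
              - (f (rcdPhi f L x₀ m τ) - fstar) ^ 2 / (R₀ ^ 2 * (2 * Lmax))) :=
            Finset.sum_le_sum fun τ _ => hτ τ
        _ = n * s - (∑ τ : Fin m → Fin n, (f (rcdPhi f L x₀ m τ) - fstar) ^ 2)
            / (R₀ ^ 2 * (2 * Lmax)) := by
            rw [Finset.sum_sub_distrib, ← Finset.mul_sum, ← Finset.sum_div]
    -- Cauchy-Schwarz
    have hCS : s ^ 2 / (n : ℝ) ^ m
        ≤ ∑ τ : Fin m → Fin n, (f (rcdPhi f L x₀ m τ) - fstar) ^ 2 := by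
      rw [div_le_iff₀ (by positivity)]
      have := sq_sum_le_card_mul_sum_sq (s := (Finset.univ : Finset (Fin m → Fin n)))
        (f := fun τ => f (rcdPhi f L x₀ m τ) - fstar)
      rw [Finset.card_univ] at this
      calc s ^ 2 ≤ (Fintype.card (Fin m → Fin n) : ℝ)
            * ∑ τ : Fin m → Fin n, (f (rcdPhi f L x₀ m τ) - fstar) ^ 2 := by
            exact_mod_cast this
        _ = (∑ τ : Fin m → Fin n, (f (rcdPhi f L x₀ m τ) - fstar) ^ 2) * (n:ℝ) ^ m := by
            rw [hcard]; ring
    have hmain : ∑ σ : Fin (m+1) → Fin n, (f (rcdPhi f L x₀ (m+1) σ) - fstar)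
        ≤ n * s - s ^ 2 / ((n:ℝ) ^ m * (R₀ ^ 2 * (2 * Lmax))) := by
      have h4 : s ^ 2 / ((n:ℝ) ^ m * (R₀ ^ 2 * (2 * Lmax)))
          ≤ (∑ τ : Fin m → Fin n, (f (rcdPhi f L x₀ m τ) - fstar) ^ 2)
            / (R₀ ^ 2 * (2 * Lmax)) := by
        rw [div_le_div_iff₀ (by positivity) (by positivity)]
        calc s ^ 2 * (R₀ ^ 2 * (2 * Lmax))
            = (s ^ 2 / (n:ℝ)^m) * (R₀ ^ 2 * (2 * Lmax)) * (n:ℝ)^m := by field_simp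
          _ ≤ (∑ τ : Fin m → Fin n, (f (rcdPhi f L x₀ m τ) - fstar) ^ 2)
              * (R₀ ^ 2 * (2 * Lmax)) * (n:ℝ)^m := by
              apply mul_le_mul_of_nonneg_right _ (by positivity)
              exact mul_le_mul_of_nonneg_right hCS (by positivity)
          _ = (∑ τ : Fin m → Fin n, (f (rcdPhi f L x₀ m τ) - fstar) ^ 2)
              * ((n:ℝ)^m * (R₀ ^ 2 * (2 * Lmax))) := by ring
      linarith [hsum]
    -- convert to a
    have halg : ((1:ℝ)/n) ^ (m+1) * (n * s - s ^ 2 / ((n:ℝ) ^ m * (R₀ ^ 2 * (2 * Lmax))))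
        = ((1:ℝ)/n) ^ m * s - (((1:ℝ)/n) ^ m * s) ^ 2 / C := by
      rw [hCdef]
      have hn0 : (n:ℝ) ≠ 0 := hn'.ne'
      simp only [one_div, inv_pow]
      field_simp
      ring
    calc a (m+1) = ((1:ℝ)/n) ^ (m+1)
          * ∑ σ : Fin (m+1) → Fin n, (f (rcdPhi f L x₀ (m+1) σ) - fstar) := rfl
      _ ≤ ((1:ℝ)/n) ^ (m+1) * (n * s - s ^ 2 / ((n:ℝ) ^ m * (R₀ ^ 2 * (2 * Lmax)))) :=
          mul_le_mul_of_nonneg_left hmain (by positivity)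
      _ = ((1:ℝ)/n) ^ m * s - (((1:ℝ)/n) ^ m * s) ^ 2 / C := halg
      _ = a m - (a m) ^ 2 / C := rfl
  have hrate := rcd_rate C hC a h0 hrec k hk
  -- identify a k with the integral
  have hak : a k = (∑ σ : Fin k → Fin n, ((1:ℝ)/n) ^ k * f (rcdPhi f L x₀ k σ)) - fstar := by
    show ((1:ℝ)/n) ^ k * ∑ σ : Fin k → Fin n, (f (rcdPhi f L x₀ k σ) - fstar) = _
    have hcardk : (Fintype.card (Fin k → Fin n) : ℝ) = (n : ℝ) ^ k := by
      rw [Fintype.card_fun]; push_cast; simp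
    rw [Finset.sum_sub_distrib, Finset.sum_const, Finset.card_univ, nsmul_eq_mul, hcardk,
      mul_sub, Finset.mul_sum]
    congr 1
    rw [one_div, inv_pow, ← mul_assoc, inv_mul_cancel₀ (by positivity)]
    simp
  rw [hInt, ← hak]
  exact hrate
end

section
/- Let f : ℝ^n → ℝ be a differentiable function that is σ-strongly convex with σ > 0, i.e. f(y) ≥ f(x) + ⟨∇f(x), y − x⟩ + (σ/2)‖y − x‖₂² for all x, y ∈ ℝ^n, whose i-th partial derivative is uniformly L_i-Lipschitz along the i-th coordinate direction for each i, and let L_max be the maximum of the L_i. Assume f attains its minimum f*. Consider randomized coordinate descent: on a probability space, let (I_k) be an i.i.d. sequence of indices uniformly distributed on {1,…,n}, set X₀ = x₀ deterministically, and X_{k+1} = X_k − (1/L_{I_k}) ∂_{I_k} f(X_k) e_{I_k}. Then for every k ≥ 0, E[f(X_k)] − f* ≤ (1 − σ/(n L_max))^k (f(x₀) − f*). -/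
open MeasureTheory
open scoped RealInnerProductSpace

section RCDhelpers
open ProbabilityTheory

lemma oneDimDescent (g d : ℝ → ℝ) (K : ℝ)
    (hg : ∀ s, HasDerivAt g (d s) s)
    (hd : ∀ s u : ℝ, |d s - d u| ≤ K * |s - u|) (t : ℝ) :
    g t ≤ g 0 + t * d 0 + K / 2 * t ^ 2 := by
  have hdc : Continuous d := by
    have hK : 0 ≤ K := by
      have := hd 1 0
      simp at this
      nlinarith [abs_nonneg (d 1 - d 0)]
    have : LipschitzWith (Real.toNNReal K) d := by
      refine LipschitzWith.of_dist_le_mul fun s u => ?_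
      rw [Real.dist_eq, Real.dist_eq, Real.coe_toNNReal K hK]
      exact hd s u
    exact this.continuous
  have hint : ∀ a b : ℝ, IntervalIntegrable d volume a b :=
    fun a b => hdc.intervalIntegrable a b
  have key : g t - g 0 = ∫ s in (0:ℝ)..t, d s :=
    (intervalIntegral.integral_eq_sub_of_hasDerivAt (fun s _ => hg s) (hint 0 t)).symm
  have hintK : ∀ a b : ℝ, IntervalIntegrable (fun s => d 0 + K * s) volume a b :=
    fun a b => (Continuous.add continuous_const
      (continuous_const.mul continuous_id)).intervalIntegrable a b
  have hval : ∀ a b : ℝ, (∫ s in a..b, (d 0 + K * s)) =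
      (b - a) * d 0 + K * (b ^ 2 - a ^ 2) / 2 := by
    intro a b
    rw [intervalIntegral.integral_add (f := fun _ => d 0) (g := fun s => K * s) (intervalIntegrable_const)
      (((continuous_const.mul continuous_id : Continuous fun s : ℝ => K * s)).intervalIntegrable a b)]
    have h1 : (∫ s in a..b, K * s) = K * (b ^ 2 - a ^ 2) / 2 := by
      rw [intervalIntegral.integral_const_mul, integral_id]; ring
    rw [h1, intervalIntegral.integral_const]
    simp [smul_eq_mul]
  rcases le_or_gt 0 t with ht | ht
  · have hmono : (∫ s in (0:ℝ)..t, d s) ≤ ∫ s in (0:ℝ)..t, (d 0 + K * s) := by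
      apply intervalIntegral.integral_mono_on ht (hint 0 t) (hintK 0 t)
      intro s hs
      have h2 := (abs_le.mp (hd s 0)).2
      rw [sub_zero, abs_of_nonneg hs.1] at h2
      linarith
    rw [hval 0 t] at hmono
    nlinarith [key, hmono]
  · have hmono : (∫ s in t..(0:ℝ), (d 0 + K * s)) ≤ ∫ s in t..(0:ℝ), d s := by
      apply intervalIntegral.integral_mono_on ht.le (hintK t 0) (hint t 0)
      intro s hs
      have h1 := (abs_le.mp (hd s 0)).1
      rw [sub_zero, abs_of_nonpos hs.2] at h1
      linarith
    rw [hval t 0] at hmono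
    have key2 : g t - g 0 = -∫ s in t..(0:ℝ), d s := by
      rw [key, intervalIntegral.integral_symm]
    nlinarith [key2, hmono]

section helpers
variable {n : ℕ} (f : EuclideanSpace ℝ (Fin n) → ℝ)

lemma lineHasDerivAt (hdiff : Differentiable ℝ f) (x : EuclideanSpace ℝ (Fin n)) (i : Fin n) (s : ℝ) :
    HasDerivAt (fun s : ℝ => f (x + s • EuclideanSpace.single i 1))
      (fderiv ℝ f (x + s • EuclideanSpace.single i 1) (EuclideanSpace.single i 1)) s := by
  have hφ : HasDerivAt (fun s : ℝ => x + s • (EuclideanSpace.single i 1 : EuclideanSpace ℝ (Fin n)))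
      (EuclideanSpace.single i 1) s := by
    simpa using (hasDerivAt_id s).smul_const (EuclideanSpace.single i 1 :
      EuclideanSpace ℝ (Fin n)) |>.const_add x
  exact (hdiff _).hasFDerivAt.comp_hasDerivAt s hφ

lemma coordStep (hdiff : Differentiable ℝ f) (i : Fin n) (Li : ℝ) (hLi : 0 < Li)
    (hLip : ∀ (x : EuclideanSpace ℝ (Fin n)) (t : ℝ),
      |fderiv ℝ f (x + t • EuclideanSpace.single i 1) (EuclideanSpace.single i 1) -
        fderiv ℝ f x (EuclideanSpace.single i 1)| ≤ Li * |t|)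
    (x : EuclideanSpace ℝ (Fin n)) :
    f (x - (1 / Li * fderiv ℝ f x (EuclideanSpace.single i 1)) • EuclideanSpace.single i 1)
      ≤ f x - (fderiv ℝ f x (EuclideanSpace.single i 1)) ^ 2 / (2 * Li) := by
  set e : EuclideanSpace ℝ (Fin n) := EuclideanSpace.single i 1 with he
  set D : EuclideanSpace ℝ (Fin n) → ℝ := fun z => fderiv ℝ f z e with hD
  have hd : ∀ s u : ℝ, |D (x + s • e) - D (x + u • e)| ≤ Li * |s - u| := by
    intro s u
    have h := hLip (x + u • e) (s - u)
    have : x + u • e + (s - u) • e = x + s • e := by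
      rw [add_assoc, ← add_smul]; ring_nf
    rwa [this] at h
  have hkey := oneDimDescent (fun s => f (x + s • e)) (fun s => D (x + s • e)) Li
    (fun s => lineHasDerivAt f hdiff x i s) hd (-(1 / Li * D x))
  simp only [zero_smul, add_zero] at hkey
  have h1 : x + (-(1 / Li * D x)) • e = x - (1 / Li * D x) • e := by
    rw [neg_smul, ← sub_eq_add_neg]
  rw [h1] at hkey
  have h2 : f x + -(1 / Li * D x) * D x + Li / 2 * (-(1 / Li * D x)) ^ 2
      = f x - D x ^ 2 / (2 * Li) := by
    field_simp; ring
  calc f (x - (1 / Li * D x) • e) ≤ _ := hkey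
    _ = f x - D x ^ 2 / (2 * Li) := h2

lemma inner_gradient (x v : EuclideanSpace ℝ (Fin n)) :
    ⟪gradient f x, v⟫ = fderiv ℝ f x v := InnerProductSpace.toDual_symm_apply

lemma sigma_le_L (σ : ℝ)
    (hsc : ∀ x y : EuclideanSpace ℝ (Fin n),
      f x + ⟪gradient f x, y - x⟫ + σ / 2 * ‖y - x‖ ^ 2 ≤ f y)
    (i : Fin n) (Li : ℝ)
    (hLip : ∀ (x : EuclideanSpace ℝ (Fin n)) (t : ℝ),
      |fderiv ℝ f (x + t • EuclideanSpace.single i 1) (EuclideanSpace.single i 1) -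
        fderiv ℝ f x (EuclideanSpace.single i 1)| ≤ Li * |t|) :
    σ ≤ Li := by
  set e : EuclideanSpace ℝ (Fin n) := EuclideanSpace.single i 1 with he
  set x : EuclideanSpace ℝ (Fin n) := 0 with hx
  set y : EuclideanSpace ℝ (Fin n) := x + (1:ℝ) • e with hy
  have h1 := hsc x y
  have h2 := hsc y x
  have hyx : y - x = e := by rw [hy]; simp
  have hxy : x - y = -e := by rw [hy]; simp
  have hne : ‖e‖ = 1 := by rw [he]; simp
  rw [hyx, hne] at h1
  rw [hxy] at h2
  rw [norm_neg, hne] at h2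
  simp only [inner_gradient] at h1 h2
  have hfd : (fderiv ℝ f y) (-e) = -(fderiv ℝ f y e) := by
    rw [map_neg]
  rw [hfd] at h2
  have hdiffD : fderiv ℝ f y e - fderiv ℝ f x e ≥ σ := by nlinarith
  have := hLip x 1
  have hx1 : x + (1:ℝ) • e = y := rfl
  rw [hx1] at this
  have := (abs_le.mp this).2
  simp at this ⊢
  linarith [hdiffD]

lemma pl_ineq (σ : ℝ) (hσ : 0 < σ)
    (hsc : ∀ x y : EuclideanSpace ℝ (Fin n),
      f x + ⟪gradient f x, y - x⟫ + σ / 2 * ‖y - x‖ ^ 2 ≤ f y)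
    (xstar : EuclideanSpace ℝ (Fin n)) (x : EuclideanSpace ℝ (Fin n)) :
    2 * σ * (f x - f xstar) ≤ ‖gradient f x‖ ^ 2 := by
  have h := hsc x xstar
  have hcs : -(‖gradient f x‖ * ‖xstar - x‖) ≤ ⟪gradient f x, xstar - x⟫ := by
    have := abs_real_inner_le_norm (gradient f x) (xstar - x)
    linarith [(abs_le.mp this).1]
  nlinarith [sq_nonneg (σ * ‖xstar - x‖ - ‖gradient f x‖), norm_nonneg (xstar - x),
    norm_nonneg (gradient f x)]

lemma grad_norm_sq (x : EuclideanSpace ℝ (Fin n)) :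
    ‖gradient f x‖ ^ 2 = ∑ i, (fderiv ℝ f x (EuclideanSpace.single i 1)) ^ 2 := by
  have hcoord : ∀ i, gradient f x i = fderiv ℝ f x (EuclideanSpace.single i 1) := by
    intro i
    rw [← inner_gradient]
    rw [show ((EuclideanSpace.single i 1 : EuclideanSpace ℝ (Fin n))) =
      EuclideanSpace.single i ((1:ℝ)) from rfl, EuclideanSpace.inner_single_right]
    simp
  rw [← real_inner_self_eq_norm_sq]
  rw [PiLp.inner_apply]
  apply Finset.sum_congr rfl
  intro i _
  rw [hcoord i]
  simp [RCLike.inner_apply]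
end helpers

noncomputable def cdStep {n : ℕ} (f : EuclideanSpace ℝ (Fin n) → ℝ) (L : Fin n → ℝ) (i : Fin n)
    (x : EuclideanSpace ℝ (Fin n)) : EuclideanSpace ℝ (Fin n) :=
  x - (1 / L i * fderiv ℝ f x (EuclideanSpace.single i 1)) • EuclideanSpace.single i 1

section prob
variable {n : ℕ} {Ω : Type*} [MeasurableSpace Ω] {μ : Measure Ω} [IsProbabilityMeasure μ]
  {I : ℕ → Ω → Fin n} {X : ℕ → Ω → EuclideanSpace ℝ (Fin n)}

lemma repMeas (hImeas : ∀ k, Measurable (I k)) (k : ℕ)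
    (G : (Fin k → Fin n) → EuclideanSpace ℝ (Fin n))
    (hG : ∀ ω, X k ω = G (fun j => I j ω)) (h : EuclideanSpace ℝ (Fin n) → ℝ) :
    Measurable (fun ω => h (X k ω)) := by
  have he : (fun ω => h (X k ω)) =
      (fun v : Fin k → Fin n => h (G v)) ∘ (fun ω (j : Fin k) => I j ω) := by
    funext ω; simp [Function.comp, hG ω]
  rw [he]
  exact (measurable_of_countable _).comp (measurable_pi_lambda _ fun j => hImeas j)

lemma repInt (hImeas : ∀ k, Measurable (I k)) (k : ℕ)
    (G : (Fin k → Fin n) → EuclideanSpace ℝ (Fin n))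
    (hG : ∀ ω, X k ω = G (fun j => I j ω)) (h : EuclideanSpace ℝ (Fin n) → ℝ) :
    Integrable (fun ω => h (X k ω)) μ := by
  refine (integrable_const (∑ v : Fin k → Fin n, |h (G v)|)).mono'
    (repMeas hImeas k G hG h).aestronglyMeasurable (ae_of_all _ fun ω => ?_)
  rw [hG ω, Real.norm_eq_abs]
  exact Finset.single_le_sum (f := fun v => |h (G v)|) (fun v _ => abs_nonneg _)
    (Finset.mem_univ _)

lemma indepSplit (hImeas : ∀ k, Measurable (I k))
    (hIindep : ProbabilityTheory.iIndepFun I μ)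
    (hIunif : ∀ (k : ℕ) (i : Fin n), μ {ω | I k ω = i} = 1 / (n : ENNReal))
    (k : ℕ) (G : (Fin k → Fin n) → EuclideanSpace ℝ (Fin n))
    (hG : ∀ ω, X k ω = G (fun j => I j ω))
    (i : Fin n) (h : EuclideanSpace ℝ (Fin n) → ℝ) :
    ∫ ω, (if I k ω = i then (1:ℝ) else 0) * h (X k ω) ∂μ
      = (1 / n : ℝ) * ∫ ω, h (X k ω) ∂μ := by
  classical
  have hdisj : Disjoint ({k} : Finset ℕ) (Finset.range k) := by simp
  have hIF := hIindep.indepFun_finset {k} (Finset.range k) hdisj hImeas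
  set φ : (↥({k} : Finset ℕ) → Fin n) → ℝ :=
    fun w => if w ⟨k, Finset.mem_singleton_self k⟩ = i then (1:ℝ) else 0 with hφ
  set ψ : (↥(Finset.range k) → Fin n) → ℝ :=
    fun w => h (G (fun j => w ⟨j.val, Finset.mem_range.mpr j.isLt⟩)) with hψ
  have hInd := hIF.comp (φ := φ) (ψ := ψ) (measurable_of_countable _)
    (measurable_of_countable _)
  have e1 : (φ ∘ fun a (j : ↥({k} : Finset ℕ)) => I j a)
      = fun ω => if I k ω = i then (1:ℝ) else 0 := rfl
  have e2 : (ψ ∘ fun a (j : ↥(Finset.range k)) => I j a)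
      = fun ω => h (X k ω) := by
    funext ω; simp only [Function.comp, hψ]; rw [hG ω]
  rw [e1, e2] at hInd
  have hχmeas : Measurable (fun ω => if I k ω = i then (1:ℝ) else 0) := by
    exact (measurable_of_countable (fun j : Fin n => if j = i then (1:ℝ) else 0)).comp
      (hImeas k)
  have hχint : Integrable (fun ω => if I k ω = i then (1:ℝ) else 0) μ := by
    refine (integrable_const (1:ℝ)).mono' hχmeas.aestronglyMeasurable
      (ae_of_all _ fun ω => ?_)
    by_cases hc : I k ω = i <;> simp [hc]
  have hmul := hInd.integral_fun_mul_eq_mul_integral hχint.aestronglyMeasurable (repInt hImeas k G hG h).aestronglyMeasurable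
  have hset : MeasurableSet {ω | I k ω = i} := hImeas k (measurableSet_singleton i)
  have hχval : (∫ ω, (if I k ω = i then (1:ℝ) else 0) ∂μ) = (1 / n : ℝ) := by
    have hind : (fun ω => if I k ω = i then (1:ℝ) else 0)
        = Set.indicator {ω | I k ω = i} (fun _ => (1:ℝ)) := by
      funext ω; simp [Set.indicator_apply, Set.mem_setOf_eq]
    rw [hind, integral_indicator_const (1:ℝ) hset, measureReal_def, hIunif k i]
    simp [ENNReal.toReal_div]
  calc ∫ ω, (if I k ω = i then (1:ℝ) else 0) * h (X k ω) ∂μ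
      = (∫ ω, (if I k ω = i then (1:ℝ) else 0) ∂μ) * ∫ ω, h (X k ω) ∂μ := hmul
    _ = (1 / n : ℝ) * ∫ ω, h (X k ω) ∂μ := by rw [hχval]
end prob
end RCDhelpers

/-- **Linear convergence of randomized coordinate descent for strongly convex functions**
(Proposition 2).  Let `f : ℝ^n → ℝ` be differentiable and `σ`-strongly convex with `σ > 0`,
with its `i`-th partial derivative uniformly `L i`-Lipschitz along the `i`-th coordinate
direction, let `Lmax = maxᵢ L i`, and assume `f` attains its minimum `f*`.  For randomized
coordinate descent with i.i.d. uniform coordinates `I k` and iterates `X 0 = x₀`,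
`X (k+1) = X k − (1 / L (I k)) ∂_{I k} f (X k) e_{I k}`, we have for every `k ≥ 0` that
`E[f (X k)] − f* ≤ (1 − σ/(n Lmax))^k (f x₀ − f*)`. -/
theorem randomized_coordinate_descent_strongly_convex_rate
    (n : ℕ) (hn : 0 < n)
    (f : EuclideanSpace ℝ (Fin n) → ℝ)
    (hdiff : Differentiable ℝ f)
    (σ : ℝ) (hσ : 0 < σ)
    (hsc : ∀ x y : EuclideanSpace ℝ (Fin n),
      f x + ⟪gradient f x, y - x⟫ + σ / 2 * ‖y - x‖ ^ 2 ≤ f y)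
    (L : Fin n → ℝ)
    (hLip : ∀ (i : Fin n) (x : EuclideanSpace ℝ (Fin n)) (t : ℝ),
      |fderiv ℝ f (x + t • EuclideanSpace.single i 1) (EuclideanSpace.single i 1) -
        fderiv ℝ f x (EuclideanSpace.single i 1)| ≤ L i * |t|)
    (Lmax : ℝ) (hLmax : IsGreatest (Set.range L) Lmax)
    (xstar : EuclideanSpace ℝ (Fin n)) (fstar : ℝ)
    (hxstar : f xstar = fstar) (hmin : ∀ x, fstar ≤ f x)
    (x₀ : EuclideanSpace ℝ (Fin n))
    (Ω : Type*) [MeasurableSpace Ω] (μ : Measure Ω) [IsProbabilityMeasure μ]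
    (I : ℕ → Ω → Fin n)
    (hImeas : ∀ k, Measurable (I k))
    (hIindep : ProbabilityTheory.iIndepFun I μ)
    (hIunif : ∀ (k : ℕ) (i : Fin n), μ {ω | I k ω = i} = 1 / (n : ENNReal))
    (X : ℕ → Ω → EuclideanSpace ℝ (Fin n))
    (hX0 : ∀ ω, X 0 ω = x₀)
    (hXrec : ∀ (k : ℕ) (ω : Ω), X (k + 1) ω = X k ω -
      (1 / L (I k ω) * fderiv ℝ f (X k ω) (EuclideanSpace.single (I k ω) 1)) •
        EuclideanSpace.single (I k ω) 1)
    (k : ℕ) :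
    (∫ ω, f (X k ω) ∂μ) - fstar ≤ (1 - σ / (n * Lmax)) ^ k * (f x₀ - fstar) := by
  classical
  have hLσ : ∀ i, σ ≤ L i := fun i => sigma_le_L f σ hsc i (L i) (hLip i)
  have hLpos : ∀ i, 0 < L i := fun i => lt_of_lt_of_le hσ (hLσ i)
  have hLle : ∀ i, L i ≤ Lmax := fun i => hLmax.2 ⟨i, rfl⟩
  have hσLmax : σ ≤ Lmax := le_trans (hLσ ⟨0, hn⟩) (hLle ⟨0, hn⟩)
  have hLmaxpos : 0 < Lmax := lt_of_lt_of_le hσ hσLmax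
  have hn1 : (1:ℝ) ≤ n := by exact_mod_cast hn
  have hnpos : (0:ℝ) < n := by exact_mod_cast hn
  have hρ0 : 0 ≤ 1 - σ / (n * Lmax) := by
    rw [sub_nonneg, div_le_one (by positivity)]
    nlinarith
  -- pointwise key inequality
  have hkey : ∀ x : EuclideanSpace ℝ (Fin n),
      (∑ i, f (cdStep f L i x)) ≤ n * f x - σ / Lmax * (f x - fstar) := by
    intro x
    have h1 : ∀ i : Fin n, f (cdStep f L i x)
        ≤ f x - (fderiv ℝ f x (EuclideanSpace.single i 1)) ^ 2 / (2 * Lmax) := by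
      intro i
      have hc := coordStep f hdiff i (L i) (hLpos i) (hLip i) x
      have h2 : (fderiv ℝ f x (EuclideanSpace.single i 1)) ^ 2 / (2 * Lmax)
          ≤ (fderiv ℝ f x (EuclideanSpace.single i 1)) ^ 2 / (2 * L i) := by
        rw [div_le_div_iff₀ (by positivity) (mul_pos two_pos (hLpos i))]
        nlinarith [sq_nonneg (fderiv ℝ f x (EuclideanSpace.single i 1)), hLle i, hLpos i]
      calc f (cdStep f L i x) ≤ _ := hc
        _ ≤ _ := by linarith
    have h2 := Finset.sum_le_sum (s := Finset.univ) (fun i _ => h1 i)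
    rw [Finset.sum_sub_distrib, Finset.sum_const, Finset.card_univ, Fintype.card_fin,
      ← Finset.sum_div] at h2
    have h3 : 2 * σ * (f x - fstar)
        ≤ ∑ i, (fderiv ℝ f x (EuclideanSpace.single i 1)) ^ 2 := by
      rw [← grad_norm_sq f x, ← hxstar]
      exact pl_ineq f σ hσ hsc xstar x
    have h4 : σ / Lmax * (f x - fstar)
        ≤ (∑ i, (fderiv ℝ f x (EuclideanSpace.single i 1)) ^ 2) / (2 * Lmax) := by
      rw [div_mul_eq_mul_div, div_le_div_iff₀ hLmaxpos (by positivity)]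
      nlinarith
    have := nsmul_eq_mul (n := n) (f x)
    calc (∑ i, f (cdStep f L i x)) ≤ _ := h2
      _ ≤ n * f x - σ / Lmax * (f x - fstar) := by
        rw [nsmul_eq_mul] at *
        linarith
  -- representation of iterates
  have hrep : ∀ k : ℕ, ∃ G : (Fin k → Fin n) → EuclideanSpace ℝ (Fin n),
      ∀ ω, X k ω = G (fun j => I j ω) := by
    intro k
    induction k with
    | zero => exact ⟨fun _ => x₀, fun ω => hX0 ω⟩
    | succ k ih =>
      obtain ⟨G, hG⟩ := ih
      refine ⟨fun v => cdStep f L (v (Fin.last k)) (G (fun j => v j.castSucc)), fun ω => ?_⟩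
      rw [hXrec k ω, hG ω]
      rfl
  -- main one-step bound
  have hstep : ∀ k : ℕ, (∫ ω, f (X (k + 1) ω) ∂μ) - fstar
      ≤ (1 - σ / (n * Lmax)) * ((∫ ω, f (X k ω) ∂μ) - fstar) := by
    intro k
    obtain ⟨G, hG⟩ := hrep k
    set Ek := ∫ ω, f (X k ω) ∂μ with hEk
    have hintT : ∀ i : Fin n, Integrable (fun ω => f (cdStep f L i (X k ω))) μ :=
      fun i => repInt hImeas k G hG (fun x => f (cdStep f L i x))
    have hintf : Integrable (fun ω => f (X k ω)) μ := repInt hImeas k G hG f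
    have hχmeas : ∀ i : Fin n, Measurable (fun ω => if I k ω = i then (1:ℝ) else 0) :=
      fun i => (measurable_of_countable (fun j : Fin n => if j = i then (1:ℝ) else 0)).comp
        (hImeas k)
    have hprod : ∀ i : Fin n,
        Integrable (fun ω => (if I k ω = i then (1:ℝ) else 0) * f (cdStep f L i (X k ω))) μ := by
      intro i
      exact Integrable.bdd_mul (hintT i) (hχmeas i).aestronglyMeasurable
        (c := 1) (ae_of_all _ fun ω => by by_cases hc : I k ω = i <;> simp [hc])
    have e1 : ∀ ω, f (X (k + 1) ω)
        = ∑ i, (if I k ω = i then (1:ℝ) else 0) * f (cdStep f L i (X k ω)) := by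
      intro ω
      have : X (k + 1) ω = cdStep f L (I k ω) (X k ω) := hXrec k ω
      rw [this]
      simp [ite_mul]
    calc (∫ ω, f (X (k + 1) ω) ∂μ) - fstar
        = (∫ ω, ∑ i, (if I k ω = i then (1:ℝ) else 0) * f (cdStep f L i (X k ω)) ∂μ) - fstar := by
          congr 1; exact integral_congr_ae (ae_of_all _ e1)
      _ = (∑ i, ∫ ω, (if I k ω = i then (1:ℝ) else 0) * f (cdStep f L i (X k ω)) ∂μ) - fstar := by
          rw [integral_finset_sum _ (fun i _ => hprod i)]
      _ = (∑ i : Fin n, (1 / n : ℝ) * ∫ ω, f (cdStep f L i (X k ω)) ∂μ) - fstar := by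
          congr 1
          exact Finset.sum_congr rfl fun i _ =>
            indepSplit hImeas hIindep hIunif k G hG i (fun x => f (cdStep f L i x))
      _ = (1 / n : ℝ) * (∫ ω, ∑ i, f (cdStep f L i (X k ω)) ∂μ) - fstar := by
          rw [integral_finset_sum _ (fun i _ => hintT i), Finset.mul_sum]
      _ ≤ (1 / n : ℝ) * (∫ ω, ((n : ℝ) - σ / Lmax) * f (X k ω) + σ / Lmax * fstar ∂μ) - fstar := by
          have hmono : (∫ ω, ∑ i, f (cdStep f L i (X k ω)) ∂μ)
              ≤ ∫ ω, ((n : ℝ) - σ / Lmax) * f (X k ω) + σ / Lmax * fstar ∂μ := by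
            apply integral_mono (integrable_finset_sum _ (fun i _ => hintT i))
              ((hintf.const_mul _).add (integrable_const _))
            intro ω
            have := hkey (X k ω)
            simp only [Pi.add_apply]
            nlinarith [this]
          have := mul_le_mul_of_nonneg_left hmono (by positivity : (0:ℝ) ≤ 1 / n)
          linarith
      _ = (1 / n : ℝ) * (((n : ℝ) - σ / Lmax) * Ek + σ / Lmax * fstar) - fstar := by
          rw [integral_add (hintf.const_mul _) (integrable_const _), integral_const_mul,
            integral_const]
          simp [measure_univ, hEk]
      _ = (1 - σ / (n * Lmax)) * (Ek - fstar) := by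
          field_simp
          ring
  -- induction
  induction k with
  | zero =>
    simp only [hX0, pow_zero, one_mul]
    rw [integral_const]
    simp [measure_univ]
  | succ k ih =>
    calc (∫ ω, f (X (k + 1) ω) ∂μ) - fstar
        ≤ (1 - σ / (n * Lmax)) * ((∫ ω, f (X k ω) ∂μ) - fstar) := hstep k
      _ ≤ (1 - σ / (n * Lmax)) * ((1 - σ / (n * Lmax)) ^ k * (f x₀ - fstar)) :=
          mul_le_mul_of_nonneg_left ih hρ0
      _ = (1 - σ / (n * Lmax)) ^ (k + 1) * (f x₀ - fstar) := by ring
end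

section
/- Let f : ℝ^n → ℝ be differentiable and suppose for every i its i-th partial derivative is uniformly L_i-Lipschitz along the i-th coordinate direction, with each L_i > 0, and let L_max = max_i L_i. Then for every x ∈ ℝ^n, averaging over a uniformly chosen coordinate, (1/n) ∑_{i=1}^n f(x − (1/L_i) ∂_i f(x) e_i) ≤ f(x) − (1/(2 n L_max)) ‖∇f(x)‖₂². -/
open Finset

lemma descent1d (φ : ℝ → ℝ) (hφ : Differentiable ℝ φ) (L : ℝ) (hL : 0 ≤ L)
    (hlip : ∀ t, |deriv φ t - deriv φ 0| ≤ L * |t|) (t : ℝ) :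
    φ t ≤ φ 0 + deriv φ 0 * t + L / 2 * t ^ 2 := by
  set ψ : ℝ → ℝ := fun s => φ 0 + deriv φ 0 * s + L / 2 * s ^ 2 - φ s with hψdef
  have hψ : ∀ s, HasDerivAt ψ (deriv φ 0 + L * s - deriv φ s) s := by
    intro s
    have h1 : HasDerivAt (fun s : ℝ => φ 0 + deriv φ 0 * s + L / 2 * s ^ 2)
        (deriv φ 0 + L * s) s := by
      have := ((hasDerivAt_id s).const_mul (deriv φ 0)).const_add (φ 0)
      have h2 : HasDerivAt (fun s : ℝ => L / 2 * s ^ 2) (L / 2 * (2 * s)) s := by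
        simpa using ((hasDerivAt_pow 2 s).const_mul (L / 2))
      have := this.add h2
      exact this.congr_deriv (by ring)
    exact h1.sub (hφ s).hasDerivAt
  have hψ0 : ψ 0 = 0 := by simp [hψdef]
  have hψdiff : Differentiable ℝ ψ := fun s => (hψ s).differentiableAt
  have key : 0 ≤ ψ t := by
    rcases le_or_gt 0 t with ht | ht
    · have hmono : MonotoneOn ψ (Set.Icc 0 t) := by
        apply monotoneOn_of_deriv_nonneg (convex_Icc 0 t) hψdiff.continuous.continuousOn
          (hψdiff.differentiableOn)
        intro s hs
        rw [(hψ s).deriv]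
        have hs' : 0 ≤ s := (Set.mem_Ioo.mp (by simpa using hs)).1.le
        have := hlip s
        rw [abs_of_nonneg hs'] at this
        have := (abs_le.mp this).2
        linarith
      have := hmono (Set.left_mem_Icc.mpr ht) (Set.right_mem_Icc.mpr ht) ht
      linarith [hψ0]
    · have hanti : AntitoneOn ψ (Set.Icc t 0) := by
        apply antitoneOn_of_deriv_nonpos (convex_Icc t 0) hψdiff.continuous.continuousOn
          (hψdiff.differentiableOn)
        intro s hs
        rw [(hψ s).deriv]
        have hs' : s ≤ 0 := (Set.mem_Ioo.mp (by simpa using hs)).2.le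
        have := hlip s
        rw [abs_of_nonpos hs'] at this
        have := (abs_le.mp this).1
        linarith
      have := hanti (Set.left_mem_Icc.mpr ht.le) (Set.right_mem_Icc.mpr ht.le) ht.le
      linarith [hψ0]
  simp only [hψdef] at key
  linarith

/-- **Expected one-step decrease of randomized coordinate descent.**  If every partial
derivative of a differentiable `f : ℝ^n → ℝ` is uniformly `L i`-Lipschitz along the `i`-th
coordinate direction with `L i > 0`, and `Lmax = maxᵢ L i`, then averaging over a uniformly
chosen coordinate,
`(1/n) ∑ᵢ f (x − (1/L i) ∂ᵢ f (x) eᵢ) ≤ f x − (1 / (2 n Lmax)) ‖∇f(x)‖₂²`. -/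
theorem expected_coordinate_step_decrease
    (n : ℕ) (hn : 0 < n) (f : EuclideanSpace ℝ (Fin n) → ℝ)
    (hdiff : Differentiable ℝ f)
    (L : Fin n → ℝ) (hL : ∀ i, 0 < L i)
    (hLip : ∀ (i : Fin n) (x : EuclideanSpace ℝ (Fin n)) (t : ℝ),
      |fderiv ℝ f (x + t • EuclideanSpace.single i 1) (EuclideanSpace.single i 1) -
        fderiv ℝ f x (EuclideanSpace.single i 1)| ≤ L i * |t|)
    (Lmax : ℝ) (hLmax : IsGreatest (Set.range L) Lmax)
    (x : EuclideanSpace ℝ (Fin n)) :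
    (1 / (n : ℝ)) * ∑ i : Fin n,
        f (x - (1 / L i * fderiv ℝ f x (EuclideanSpace.single i 1)) • EuclideanSpace.single i 1)
      ≤ f x - 1 / (2 * n * Lmax) *
          ∑ i : Fin n, (fderiv ℝ f x (EuclideanSpace.single i 1)) ^ 2 := by
  have hLmaxpos : 0 < Lmax := lt_of_lt_of_le (hL ⟨0, hn⟩) (hLmax.2 ⟨⟨0, hn⟩, rfl⟩)
  set g : Fin n → ℝ := fun i => fderiv ℝ f x (EuclideanSpace.single i 1) with hg
  -- per-coordinate bound
  have step : ∀ i : Fin n,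
      f (x - (1 / L i * g i) • EuclideanSpace.single i 1) ≤ f x - g i ^ 2 / (2 * Lmax) := by
    intro i
    set e : EuclideanSpace ℝ (Fin n) := EuclideanSpace.single i 1 with he
    set φ : ℝ → ℝ := fun t => f (x + t • e) with hφdef
    have hline : ∀ t : ℝ, HasDerivAt (fun t : ℝ => x + t • e) e t := by
      intro t
      simpa using ((hasDerivAt_id t).smul_const e).const_add x
    have hφd : ∀ t, HasDerivAt φ (fderiv ℝ f (x + t • e) e) t := by
      intro t
      exact ((hdiff (x + t • e)).hasFDerivAt.comp_hasDerivAt t (hline t))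
    have hφdiff : Differentiable ℝ φ := fun t => (hφd t).differentiableAt
    have hderiv : ∀ t, deriv φ t = fderiv ℝ f (x + t • e) e := fun t => (hφd t).deriv
    have hd0 : deriv φ 0 = g i := by rw [hderiv]; simp [hg, he]
    have hlip : ∀ t, |deriv φ t - deriv φ 0| ≤ L i * |t| := by
      intro t
      rw [hderiv, hderiv]
      simpa using hLip i x t
    have := descent1d φ hφdiff (L i) (hL i).le hlip (-(1 / L i * g i))
    rw [hd0] at this
    have hLi := hL i
    have heq : x + (-(1 / L i * g i)) • e = x - (1 / L i * g i) • e := by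
      rw [neg_smul, ← sub_eq_add_neg]
    rw [hφdef] at this
    simp only [heq] at this
    have hφ0 : φ 0 = f x := by simp [hφdef]
    calc f (x - (1 / L i * g i) • e)
        ≤ φ 0 + g i * (-(1 / L i * g i)) + L i / 2 * (-(1 / L i * g i)) ^ 2 := this
      _ = f x - g i ^ 2 / (2 * L i) := by rw [hφ0]; field_simp; ring
      _ ≤ f x - g i ^ 2 / (2 * Lmax) := by
          have hle : L i ≤ Lmax := hLmax.2 ⟨i, rfl⟩
          have : g i ^ 2 / (2 * Lmax) ≤ g i ^ 2 / (2 * L i) := by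
            apply div_le_div_of_nonneg_left (sq_nonneg _) (by linarith) (by linarith)
          linarith
  have hsum : ∑ i : Fin n, f (x - (1 / L i * g i) • EuclideanSpace.single i 1)
      ≤ ∑ i : Fin n, (f x - g i ^ 2 / (2 * Lmax)) := Finset.sum_le_sum (fun i _ => step i)
  have hnpos : (0:ℝ) < n := by exact_mod_cast hn
  rw [Finset.sum_sub_distrib, Finset.sum_const, card_univ, Fintype.card_fin, nsmul_eq_mul] at hsum
  have := mul_le_mul_of_nonneg_left hsum (by positivity : (0:ℝ) ≤ 1 / n)
  calc (1 / (n : ℝ)) * ∑ i : Fin n, f (x - (1 / L i * g i) • EuclideanSpace.single i 1)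
      ≤ (1 / (n : ℝ)) * ((n : ℝ) * f x - ∑ i : Fin n, g i ^ 2 / (2 * Lmax)) := this
    _ = f x - 1 / (2 * n * Lmax) * ∑ i : Fin n, g i ^ 2 := by
        rw [← Finset.sum_div]
        field_simp
end

section
/- Let f : ℝ^n → ℝ be differentiable and σ-strongly convex with σ > 0, suppose for every i its i-th partial derivative is uniformly L_i-Lipschitz along the i-th coordinate direction with L_i > 0, let L_max = max_i L_i, and suppose f attains its minimum f*. Then for every x ∈ ℝ^n, the expected one-step progress of uniformly randomized coordinate descent contracts the optimality gap: (1/n) ∑_{i=1}^n ( f(x − (1/L_i) ∂_i f(x) e_i) − f* ) ≤ (1 − σ/(n L_max)) (f(x) − f*). -/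
open scoped RealInnerProductSpace

lemma scalar_id (a b c A : ℝ) (hb : b ≠ 0) (hc : c ≠ 0) :
    (1 - a / (b * c)) * A * b = b * A - a * A / c := by
  field_simp

lemma scalar_id2 (c g Li : ℝ) (hLi : Li ≠ 0) :
    c + -(1 / Li * g) * g + Li / 2 * (-(1 / Li * g)) ^ 2 = c - g ^ 2 / (2 * Li) := by
  field_simp
  ring

lemma oneD (g : ℝ → ℝ) (hg : Differentiable ℝ g) (L : ℝ) (hL : 0 < L)
    (hlip : ∀ s, |deriv g s - deriv g 0| ≤ L * |s|) (t : ℝ) :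
    g t ≤ g 0 + t * deriv g 0 + L / 2 * t ^ 2 := by
  set ψ : ℝ → ℝ := fun s => g s - s * deriv g 0 - L / 2 * s ^ 2 with hψ
  have hψdiff : Differentiable ℝ ψ := by
    apply Differentiable.sub
    · exact hg.sub (differentiable_id.mul (differentiable_const _))
    · exact (differentiable_const _).mul (differentiable_pow 2)
  have hderiv : ∀ s, deriv ψ s = deriv g s - deriv g 0 - L * s := by
    intro s
    have h1 : HasDerivAt (fun s : ℝ => s * deriv g 0) (deriv g 0) s := by
      simpa using (hasDerivAt_id s).mul_const (deriv g 0)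
    have h2 : HasDerivAt (fun s : ℝ => L / 2 * s ^ 2) (L * s) s := by
      have := (hasDerivAt_pow 2 s).const_mul (L / 2)
      simpa [mul_comm, mul_assoc] using this.congr_deriv (by ring)
    exact (((hg s).hasDerivAt.sub h1).sub h2).deriv
  have key : ψ t ≤ ψ 0 := by
    rcases le_or_gt 0 t with ht | ht
    · have hmono : AntitoneOn ψ (Set.Icc 0 t) := by
        apply antitoneOn_of_deriv_nonpos (convex_Icc 0 t) hψdiff.continuous.continuousOn
          hψdiff.differentiableOn
        intro s hs
        rw [interior_Icc] at hs
        rw [hderiv]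
        have := (abs_le.1 (hlip s)).2
        have hs0 : 0 ≤ s := le_of_lt hs.1
        rw [abs_of_nonneg hs0] at this
        linarith
      exact hmono (Set.left_mem_Icc.2 ht) (Set.right_mem_Icc.2 ht) ht
    · have hmono : MonotoneOn ψ (Set.Icc t 0) := by
        apply monotoneOn_of_deriv_nonneg (convex_Icc t 0) hψdiff.continuous.continuousOn
          hψdiff.differentiableOn
        intro s hs
        rw [interior_Icc] at hs
        rw [hderiv]
        have := (abs_le.1 (hlip s)).1
        have hs0 : s ≤ 0 := le_of_lt hs.2
        rw [abs_of_nonpos hs0] at this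
        linarith
      exact hmono (Set.left_mem_Icc.2 ht.le) (Set.right_mem_Icc.2 ht.le) ht.le
  simp only [hψ] at key
  nlinarith [key]

set_option maxHeartbeats 1000000 in
/-- **Expected one-step contraction under strong convexity.**  If `f : ℝ^n → ℝ` is
differentiable, `σ`-strongly convex with `σ > 0`, each partial derivative is uniformly
`L i`-Lipschitz along the `i`-th coordinate direction with `L i > 0`, `Lmax = maxᵢ L i`,
and `f` attains its minimum `f*`, then for every `x`,
`(1/n) ∑ᵢ (f (x − (1/L i) ∂ᵢ f (x) eᵢ) − f*) ≤ (1 − σ/(n Lmax)) (f x − f*)`. -/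
theorem expected_step_contraction
    (n : ℕ) (hn : 0 < n) (f : EuclideanSpace ℝ (Fin n) → ℝ)
    (hdiff : Differentiable ℝ f)
    (σ : ℝ) (hσ : 0 < σ)
    (hsc : ∀ x y : EuclideanSpace ℝ (Fin n),
      f x + ⟪gradient f x, y - x⟫ + σ / 2 * ‖y - x‖ ^ 2 ≤ f y)
    (L : Fin n → ℝ) (hL : ∀ i, 0 < L i)
    (hLip : ∀ (i : Fin n) (x : EuclideanSpace ℝ (Fin n)) (t : ℝ),
      |fderiv ℝ f (x + t • EuclideanSpace.single i 1) (EuclideanSpace.single i 1) -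
        fderiv ℝ f x (EuclideanSpace.single i 1)| ≤ L i * |t|)
    (Lmax : ℝ) (hLmax : IsGreatest (Set.range L) Lmax)
    (xstar : EuclideanSpace ℝ (Fin n)) (fstar : ℝ)
    (hxstar : f xstar = fstar) (hmin : ∀ x, fstar ≤ f x)
    (x : EuclideanSpace ℝ (Fin n)) :
    (1 / (n : ℝ)) * ∑ i : Fin n,
        (f (x - (1 / L i * fderiv ℝ f x (EuclideanSpace.single i 1)) •
            EuclideanSpace.single i 1) - fstar)
      ≤ (1 - σ / (n * Lmax)) * (f x - fstar) := by
  have hn' : (0 : ℝ) < n := Nat.cast_pos.2 hn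
  have hLmaxpos : 0 < Lmax := lt_of_lt_of_le (hL ⟨0, hn⟩) (hLmax.2 ⟨⟨0, hn⟩, rfl⟩)
  set g : Fin n → ℝ := fun i => fderiv ℝ f x (EuclideanSpace.single i 1) with hg
  -- descent lemma per coordinate
  have descent : ∀ i : Fin n,
      f (x - (1 / L i * g i) • EuclideanSpace.single i 1) ≤ f x - g i ^ 2 / (2 * L i) := by
    intro i
    set e : EuclideanSpace ℝ (Fin n) := EuclideanSpace.single i 1 with he
    set φ : ℝ → ℝ := fun t => f (x + t • e) with hφ
    have hderφ : ∀ s, HasDerivAt φ (fderiv ℝ f (x + s • e) e) s := by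
      intro s
      have h1 : HasDerivAt (fun t : ℝ => x + t • e) e s := by
        simpa using ((hasDerivAt_id s).smul_const e).const_add x
      exact ((hdiff (x + s • e)).hasFDerivAt.comp_hasDerivAt s h1)
    have hφdiff : Differentiable ℝ φ := fun s => (hderφ s).differentiableAt
    have hφd : ∀ s, deriv φ s = fderiv ℝ f (x + s • e) e := fun s => (hderφ s).deriv
    have hφ0 : deriv φ 0 = g i := by rw [hφd]; simp [hg, he]
    have hb := oneD φ hφdiff (L i) (hL i) (fun s => by
      rw [hφd, hφd]
      simpa using hLip i x s) (-(1 / L i * g i))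
    have hx0 : x + (-(1 / L i * g i)) • e = x - (1 / L i * g i) • e := by
      rw [neg_smul, ← sub_eq_add_neg]
    rw [hφ] at hb
    simp only [hx0] at hb
    rw [hφ0] at hb
    have hLi := hL i
    calc f (x - (1 / L i * g i) • e)
        ≤ f (x + (0:ℝ) • e) + (-(1 / L i * g i)) * g i + L i / 2 * (-(1 / L i * g i)) ^ 2 := by
          simpa using hb
      _ = f x - g i ^ 2 / (2 * L i) := by
          rw [zero_smul, add_zero]
          exact scalar_id2 (f x) (g i) (L i) (ne_of_gt hLi)
  -- PL inequality
  have hPL : 2 * σ * (f x - fstar) ≤ ‖gradient f x‖ ^ 2 := by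
    have h1 := hsc x xstar
    rw [hxstar] at h1
    have h2 : ⟪gradient f x, xstar - x⟫ ≥ -(‖gradient f x‖ * ‖xstar - x‖) := by
      have := abs_le.1 (abs_real_inner_le_norm (gradient f x) (xstar - x))
      linarith [this.1]
    have hng : (0:ℝ) ≤ ‖gradient f x‖ := norm_nonneg _
    have hnd : (0:ℝ) ≤ ‖xstar - x‖ := norm_nonneg _
    nlinarith [sq_nonneg (σ * ‖xstar - x‖ - ‖gradient f x‖), mul_nonneg hσ.le hnd]
  -- norm squared of gradient equals sum of squares of partials
  have hnormsq : ‖gradient f x‖ ^ 2 = ∑ i, g i ^ 2 := by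
    have hcomp : ∀ i, g i = gradient f x i := by
      intro i
      have h : ⟪gradient f x, EuclideanSpace.single i (1:ℝ)⟫ =
          fderiv ℝ f x (EuclideanSpace.single i 1) := by
        rw [gradient]
        exact InnerProductSpace.toDual_symm_apply
      show fderiv ℝ f x (EuclideanSpace.single i 1) = gradient f x i
      rw [← h, real_inner_comm, EuclideanSpace.inner_single_left]
      simp
    rw [EuclideanSpace.norm_eq, Real.sq_sqrt (by positivity)]
    exact Finset.sum_congr rfl fun i _ => by rw [hcomp i, Real.norm_eq_abs, sq_abs]
  -- combine
  have hA : 0 ≤ f x - fstar := sub_nonneg.2 (hmin x)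
  have hsum1 : ∑ i : Fin n, (f (x - (1 / L i * g i) • EuclideanSpace.single i 1) - fstar)
      ≤ ∑ i : Fin n, ((f x - fstar) - g i ^ 2 / (2 * Lmax)) := by
    apply Finset.sum_le_sum
    intro i _
    have h1 := descent i
    have h2 : g i ^ 2 / (2 * Lmax) ≤ g i ^ 2 / (2 * L i) :=
      div_le_div_of_nonneg_left (sq_nonneg _) (by linarith [hL i]) (by
        have := hLmax.2 ⟨i, rfl⟩; linarith)
    linarith
  have hsum2 : ∑ i : Fin n, ((f x - fstar) - g i ^ 2 / (2 * Lmax))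
      = n * (f x - fstar) - (∑ i, g i ^ 2) / (2 * Lmax) := by
    rw [Finset.sum_sub_distrib, Finset.sum_const, Finset.card_univ, Fintype.card_fin,
      ← Finset.sum_div]
    simp [nsmul_eq_mul]
  have hG : 2 * σ * (f x - fstar) ≤ ∑ i, g i ^ 2 := by
    rw [← hnormsq]; exact hPL
  rw [div_mul_eq_mul_div, div_le_iff₀ hn']
  have step : ∑ i : Fin n, (f (x - (1 / L i * g i) • EuclideanSpace.single i 1) - fstar)
      ≤ n * (f x - fstar) - σ * (f x - fstar) / Lmax := by
    rw [hsum2] at hsum1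
    have : σ * (f x - fstar) / Lmax ≤ (∑ i, g i ^ 2) / (2 * Lmax) := by
      rw [div_le_div_iff₀ hLmaxpos (by linarith)]
      nlinarith
    linarith
  calc (1:ℝ) * ∑ i : Fin n, (f (x - (1 / L i * g i) • EuclideanSpace.single i 1) - fstar)
      ≤ n * (f x - fstar) - σ * (f x - fstar) / Lmax := by rw [one_mul]; exact step
    _ = (1 - σ / (n * Lmax)) * (f x - fstar) * n :=
        (scalar_id σ (n:ℝ) Lmax (f x - fstar) (ne_of_gt hn') (ne_of_gt hLmaxpos)).symm
end
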